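/- arXiv:2408.00543 — 2 statements merged into one kernel-verified Lean document; each statement's English description precedes it below -/
import Mathlib

section
/- Let B ∈ ℝ^{n×n} be symmetric positive definite and x ∈ ℝⁿ. Then: (a) if d_B(x) ≠ 0 then d_B(x) is a descent direction for f at x; (b) the following statements are equivalent: (i) x is not Pareto critical; (ii) d_B(x) ≠ 0; (iii) θ_B(x) < 0. -/
open RealInnerProductSpace

noncomputable section

abbrev E (n : ℕ) := EuclideanSpace ℝ (Fin n)

def maxD {n m : ℕ} [NeZero m] (f : Fin m → E n → ℝ) (x d : E n) : ℝ :=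
  Finset.univ.sup' Finset.univ_nonempty (fun i => ⟪gradient (f i) x, d⟫)

def ParetoCritical {n m : ℕ} (f : Fin m → E n → ℝ) (x : E n) : Prop :=
  ∀ d : E n, ∃ i, 0 ≤ ⟪gradient (f i) x, d⟫

def quad {n : ℕ} (B : Matrix (Fin n) (Fin n) ℝ) (d : E n) : ℝ :=
  ∑ i, ∑ j, d i * B i j * d j

/-!
Write `φ d = maxD f x d + quad B d / 2`. Comparing the minimizer `dB` with `dB / 2` gives
`maxD f x dB ≤ -(3/4) quad B dB`, so a nonzero minimizer is a descent direction. Conversely, if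
`d` is a descent direction then `maxD f x d < 0`, and `φ (t • d) < 0` for
`t = -maxD f x d / quad B d`; hence the minimum value is negative, which rules out `dB = 0`.
-/

section maxD

variable {n m : ℕ} [NeZero m] (f : Fin m → E n → ℝ) (x : E n)

lemma maxD_zero : maxD f x 0 = 0 := by
  simp [maxD]

lemma maxD_smul_of_nonneg (d : E n) {t : ℝ} (ht : 0 ≤ t) :
    maxD f x (t • d) = t * maxD f x d := by
  simp only [maxD, inner_smul_right]
  exact (Finset.apply_sup'_eq_sup'_comp Finset.univ_nonempty
    (t * ·) (fun a b => mul_max_of_nonneg a b ht)).symm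

lemma inner_gradient_le_maxD (d : E n) (i : Fin m) : ⟪gradient (f i) x, d⟫ ≤ maxD f x d :=
  Finset.le_sup' (fun j => ⟪gradient (f j) x, d⟫) (Finset.mem_univ i)

lemma maxD_neg_iff {d : E n} : maxD f x d < 0 ↔ ∀ i, ⟪gradient (f i) x, d⟫ < 0 := by
  simp [maxD, Finset.sup'_lt_iff]

lemma not_paretoCritical_iff : ¬ ParetoCritical f x ↔ ∃ d, maxD f x d < 0 := by
  simp [ParetoCritical, maxD_neg_iff]

end maxD

section quad

variable {n : ℕ} (B : Matrix (Fin n) (Fin n) ℝ)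

lemma quad_eq_dotProduct (d : E n) :
    quad B d = dotProduct (star (d : Fin n → ℝ)) (B.mulVec d) := by
  simp only [quad, dotProduct, Matrix.mulVec, Pi.star_apply, star_trivial, Finset.mul_sum]
  exact Finset.sum_congr rfl fun i _ => Finset.sum_congr rfl fun j _ => by ring

lemma quad_zero : quad B 0 = 0 := by
  simp [quad]

lemma quad_smul (d : E n) (t : ℝ) : quad B (t • d) = t ^ 2 * quad B d := by
  simp only [quad, PiLp.smul_apply, smul_eq_mul, Finset.mul_sum]
  exact Finset.sum_congr rfl fun i _ => Finset.sum_congr rfl fun j _ => by ring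

lemma quad_pos {B} (hB : B.PosDef) {d : E n} (hd : d ≠ 0) : 0 < quad B d := by
  rw [quad_eq_dotProduct]
  exact hB.dotProduct_mulVec_pos fun h => hd (by simpa using congrArg (WithLp.toLp 2) h)

end quad

lemma exists_pos_mul_add_sq_neg {a q : ℝ} (ha : a < 0) (hq : 0 < q) :
    ∃ t, 0 < t ∧ t * a + t ^ 2 * q / 2 < 0 := by
  refine ⟨-a / q, div_pos (neg_pos.2 ha) hq, ?_⟩
  have : -a / q * q = -a := div_mul_cancel₀ _ hq.ne'
  nlinarith [div_pos (neg_pos.2 ha) hq]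

section minimizer

variable {n m : ℕ} [NeZero m] {f : Fin m → E n → ℝ} {B : Matrix (Fin n) (Fin n) ℝ}
  {x dB : E n}
  (hmin : ∀ d : E n, maxD f x dB + quad B dB / 2 ≤ maxD f x d + quad B d / 2)
include hmin

lemma maxD_le_of_isMin : maxD f x dB ≤ -(3 / 4) * quad B dB := by
  have h := hmin ((1 / 2 : ℝ) • dB)
  rw [maxD_smul_of_nonneg f x dB (by norm_num), quad_smul] at h
  linarith

lemma objective_neg_of_isMin_of_maxD_neg (hB : B.PosDef) {d : E n} (hd : maxD f x d < 0) :
    maxD f x dB + quad B dB / 2 < 0 := by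
  have hd0 : d ≠ 0 := by
    rintro rfl
    exact (maxD_zero f x).not_lt hd
  obtain ⟨t, ht, hneg⟩ := exists_pos_mul_add_sq_neg hd (quad_pos hB hd0)
  have h := hmin (t • d)
  rw [maxD_smul_of_nonneg f x d ht.le, quad_smul] at h
  linarith

end minimizer

theorem stmt6_general {n m : ℕ} [NeZero m] (f : Fin m → E n → ℝ)
    (B : Matrix (Fin n) (Fin n) ℝ) (hB : B.PosDef)
    (x dB : E n) (θ : ℝ)
    (hmin : ∀ d : E n, maxD f x dB + quad B dB / 2 ≤ maxD f x d + quad B d / 2)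
    (hθ : θ = maxD f x dB + quad B dB / 2) :
    (dB ≠ 0 → ∀ i, ⟪gradient (f i) x, dB⟫ < 0) ∧
    (¬ ParetoCritical f x ↔ dB ≠ 0) ∧ (¬ ParetoCritical f x ↔ θ < 0) := by
  subst hθ
  have descent (hne : dB ≠ 0) (i : Fin m) : ⟪gradient (f i) x, dB⟫ < 0 := by
    have hq := quad_pos hB hne
    linarith [inner_gradient_le_maxD f x dB i, maxD_le_of_isMin hmin]
  have not_critical_of_ne (hne : dB ≠ 0) : ¬ ParetoCritical f x :=
    (not_paretoCritical_iff f x).2 ⟨dB, (maxD_neg_iff f x).2 (descent hne)⟩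
  have neg_of_not_critical (h : ¬ ParetoCritical f x) : maxD f x dB + quad B dB / 2 < 0 := by
    obtain ⟨d, hd⟩ := (not_paretoCritical_iff f x).1 h
    exact objective_neg_of_isMin_of_maxD_neg hmin hB hd
  have ne_of_neg (h : maxD f x dB + quad B dB / 2 < 0) : dB ≠ 0 := by
    rintro rfl
    simp [maxD_zero, quad_zero] at h
  exact ⟨descent, ⟨fun h => ne_of_neg (neg_of_not_critical h), not_critical_of_ne⟩,
    ⟨neg_of_not_critical, fun h => not_critical_of_ne (ne_of_neg h)⟩⟩

/-- descent property of d_B(x) and equivalences with Pareto criticality. -/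
theorem stmt6 {n m : ℕ} [NeZero m] (f : Fin m → E n → ℝ)
    (hf : ∀ i, ContDiff ℝ 1 (f i))
    (B : Matrix (Fin n) (Fin n) ℝ) (hB : B.PosDef)
    (x dB : E n) (θ : ℝ)
    (hmin : ∀ d : E n, maxD f x dB + quad B dB / 2 ≤ maxD f x d + quad B d / 2)
    (hθ : θ = maxD f x dB + quad B dB / 2) :
    (dB ≠ 0 → ∀ i, ⟪gradient (f i) x, dB⟫ < 0) ∧
    (¬ ParetoCritical f x ↔ dB ≠ 0) ∧ (¬ ParetoCritical f x ↔ θ < 0) :=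
  stmt6_general f B hB x dB θ hmin hθ
end
end

section
/- Suppose each ∇f_i is Lipschitz continuous with constant L_i and set L := max_{1≤i≤m} L_i. Let B ∈ ℝ^{n×n} be symmetric positive definite, x ∈ ℝⁿ, d := d_B(x) ≠ 0, σ₂ ∈ (0,1), α > 0, x' := x + α d, and assume the Wolfe curvature condition D(x', d) ≥ σ₂ D(x, d) holds. Then ‖x' − x‖ ≥ ((1 − σ₂)/L) cos β · ‖d_SD(x)‖, where cos β := (dᵀBd)/(‖d‖ ‖Bd‖). -/
open RealInnerProductSpace

noncomputable section

def mulVecE {n : ℕ} (B : Matrix (Fin n) (Fin n) ℝ) (v : E n) : E n :=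
  Matrix.toEuclideanLin B v

/-!
The map `D(x, ·)` is sublinear. Restricting the objective of `d = d_B(x)` to the ray `t • d`
gives `D(x, d) = -dᵀBd`, and perturbing `d` in a direction `u` gives `D(x, u) ≥ -⟪Bd, u⟫`; for
`B = 1` the first fact gives `D(x, d_SD) = -‖d_SD‖²`, and with the second one and Cauchy–Schwarz
`‖d_SD‖ ≤ ‖Bd‖`. The curvature condition and the Lipschitz bound
`D(x', d) ≤ D(x, d) + L ‖x' - x‖ ‖d‖` give `(1 - σ₂) dᵀBd ≤ L ‖x' - x‖ ‖d‖`, which is the claim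
after multiplying by `‖d_SD‖ ≤ ‖Bd‖`.
-/

open Filter Topology

lemma nonneg_of_forall_pos_nonneg_mul_add_sq {a r : ℝ} (h : ∀ t > 0, 0 ≤ t * a + t ^ 2 * r) :
    0 ≤ a := by
  have hlim : Tendsto (fun t : ℝ => a + t * r) (𝓝[>] 0) (𝓝 a) := by
    have : Continuous fun t : ℝ => a + t * r := by fun_prop
    simpa using (this.tendsto 0).mono_left nhdsWithin_le_nhds
  refine ge_of_tendsto hlim (eventually_nhdsWithin_of_forall fun t (ht : 0 < t) => ?_)
  have : 0 ≤ t * (a + t * r) := by linarith [h t ht]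
  exact nonneg_of_mul_nonneg_right this ht

section Minimizer

variable {F : Type*} [NormedAddCommGroup F] [InnerProductSpace ℝ F]
  {p : F → ℝ} {A : F →ₗ[ℝ] F} {d : F}

lemma apply_eq_neg_inner_self_of_minimizer (hp : ∀ t > 0, ∀ u, p (t • u) = t * p u)
    (hmin : ∀ v, p d + ⟪A d, d⟫ / 2 ≤ p v + ⟪A v, v⟫ / 2) : p d = -⟪A d, d⟫ := by
  set φ : ℝ → ℝ := fun t => t * p d + t ^ 2 * ⟪A d, d⟫ / 2
  have hφmin : IsLocalMin φ 1 := by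
    filter_upwards [lt_mem_nhds one_pos] with t ht
    have := hmin (t • d)
    rw [map_smul, real_inner_smul_left, real_inner_smul_right, hp t ht] at this
    simp only [φ]
    linarith
  have hφ : HasDerivAt φ (p d + ⟪A d, d⟫) 1 := by
    have := ((hasDerivAt_id (1 : ℝ)).mul_const (p d)).add
      (((hasDerivAt_pow 2 (1 : ℝ)).mul_const ⟪A d, d⟫).div_const 2)
    exact this.congr_deriv (by norm_num)
  linarith [hφmin.hasDerivAt_eq_zero hφ]

lemma neg_inner_le_of_minimizer (hp_add : ∀ u v, p (u + v) ≤ p u + p v)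
    (hp : ∀ t > 0, ∀ u, p (t • u) = t * p u) (hA : A.IsSymmetric)
    (hmin : ∀ v, p d + ⟪A d, d⟫ / 2 ≤ p v + ⟪A v, v⟫ / 2) (u : F) : -⟪A d, u⟫ ≤ p u := by
  suffices 0 ≤ p u + ⟪A d, u⟫ by linarith
  refine nonneg_of_forall_pos_nonneg_mul_add_sq (r := ⟪A u, u⟫ / 2) fun t ht => ?_
  have hexp : ⟪A (d + t • u), d + t • u⟫ = ⟪A d, d⟫ + 2 * t * ⟪A d, u⟫ + t ^ 2 * ⟪A u, u⟫ := by
    simp only [map_add, map_smul, inner_add_left, inner_add_right, real_inner_smul_left,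
      real_inner_smul_right, hA u d, real_inner_comm (A d) u]
    ring
  have hsub : p (d + t • u) ≤ p d + t * p u := hp t ht u ▸ hp_add d (t • u)
  linarith [hmin (d + t • u)]

lemma norm_le_of_minimizer_of_neg_inner_le (hp : ∀ t > 0, ∀ u, p (t • u) = t * p u)
    (hmin : ∀ v, p d + ‖d‖ ^ 2 / 2 ≤ p v + ‖v‖ ^ 2 / 2) {w : F} (hw : ∀ u, -⟪w, u⟫ ≤ p u) :
    ‖d‖ ≤ ‖w‖ := by
  have hd : p d = -‖d‖ ^ 2 := by
    simpa using apply_eq_neg_inner_self_of_minimizer (A := LinearMap.id) hp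
      (by simpa [real_inner_self_eq_norm_sq] using hmin)
  have hsq : ‖d‖ * ‖d‖ ≤ ‖w‖ * ‖d‖ := by
    linarith [hw d, real_inner_le_norm w d]
  rcases (norm_nonneg d).eq_or_lt with h0 | hpos
  · rw [← h0]; exact norm_nonneg w
  · exact le_of_mul_le_mul_right hsq hpos

end Minimizer

section MaxD

variable {n m : ℕ} [NeZero m] (f : Fin m → E n → ℝ)

lemma maxD_smul (x u : E n) {t : ℝ} (ht : 0 ≤ t) : maxD f x (t • u) = t * maxD f x u := by
  unfold maxD
  rw [Finset.apply_sup'_eq_sup'_comp _ (t * ·) fun a b => mul_max_of_nonneg a b ht]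
  exact Finset.sup'_congr _ rfl fun i _ => real_inner_smul_right _ _ t

lemma maxD_add_le (x u v : E n) : maxD f x (u + v) ≤ maxD f x u + maxD f x v := by
  refine Finset.sup'_le _ _ fun i hi => ?_
  rw [inner_add_right]
  exact add_le_add (Finset.le_sup' (fun i => ⟪gradient (f i) x, u⟫) hi)
    (Finset.le_sup' (fun i => ⟪gradient (f i) x, v⟫) hi)

lemma maxD_le_add_of_lipschitzWith {L : Fin m → NNReal}
    (hL : ∀ i, LipschitzWith (L i) (gradient (f i))) {K : ℝ} (hK : ∀ i, (L i : ℝ) ≤ K)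
    (x x' u : E n) : maxD f x' u ≤ maxD f x u + K * ‖x' - x‖ * ‖u‖ := by
  refine Finset.sup'_le _ _ fun i hi => ?_
  have hgrad : ‖gradient (f i) x' - gradient (f i) x‖ ≤ K * ‖x' - x‖ := by
    calc _ ≤ L i * ‖x' - x‖ := by simpa [dist_eq_norm] using (hL i).dist_le_mul x' x
      _ ≤ K * ‖x' - x‖ := by gcongr; exact hK i
  calc ⟪gradient (f i) x', u⟫
      = ⟪gradient (f i) x, u⟫ + ⟪gradient (f i) x' - gradient (f i) x, u⟫ := by
        rw [inner_sub_left]; ring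
    _ ≤ maxD f x u + K * ‖x' - x‖ * ‖u‖ := by
        gcongr
        · exact Finset.le_sup' (fun i => ⟪gradient (f i) x, u⟫) hi
        · exact (real_inner_le_norm _ _).trans (by gcongr)

end MaxD

lemma quad_eq_inner {n : ℕ} (B : Matrix (Fin n) (Fin n) ℝ) (v : E n) :
    quad B v = ⟪Matrix.toEuclideanLin B v, v⟫ := by
  simp [quad, Matrix.toEuclideanLin, Matrix.mulVec, dotProduct, PiLp.inner_apply, Finset.mul_sum,
    mul_assoc]

theorem stmt19_general {n m : ℕ} [NeZero m] (f : Fin m → E n → ℝ)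
    (L : Fin m → NNReal) (hL : ∀ i, LipschitzWith (L i) (fun z => gradient (f i) z))
    (Lmax : ℝ) (hLmax : Lmax = Finset.univ.sup' Finset.univ_nonempty fun i => (L i : ℝ))
    (B : Matrix (Fin n) (Fin n) ℝ) (hB : B.PosDef)
    (x d dsd : E n)
    (hdB : ∀ dd : E n, maxD f x d + quad B d / 2 ≤ maxD f x dd + quad B dd / 2)
    (hdsd : ∀ dd : E n, maxD f x dsd + ‖dsd‖ ^ 2 / 2 ≤ maxD f x dd + ‖dd‖ ^ 2 / 2)
    (σ₂ : ℝ) (x' : E n)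
    (hcurv : σ₂ * maxD f x d ≤ maxD f x' d) :
    ((1 - σ₂) / Lmax) * (quad B d / (‖d‖ * ‖mulVecE B d‖)) * ‖dsd‖ ≤ ‖x' - x‖ := by
  have hsmul : ∀ t > 0, ∀ u, maxD f x (t • u) = t * maxD f x u :=
    fun t ht u => maxD_smul f x u ht.le
  have hmin : ∀ v, maxD f x d + ⟪Matrix.toEuclideanLin B d, d⟫ / 2 ≤
      maxD f x v + ⟪Matrix.toEuclideanLin B v, v⟫ / 2 := by
    simpa only [quad_eq_inner] using hdB
  have hDd : maxD f x d = -quad B d := by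
    rw [quad_eq_inner]; exact apply_eq_neg_inner_self_of_minimizer hsmul hmin
  have hdsd_le : ‖dsd‖ ≤ ‖mulVecE B d‖ :=
    norm_le_of_minimizer_of_neg_inner_le hsmul hdsd <| neg_inner_le_of_minimizer
      (maxD_add_le f x) hsmul (Matrix.isSymmetric_toEuclideanLin_iff.mpr hB.isHermitian) hmin
  have hL_le : ∀ i, (L i : ℝ) ≤ Lmax :=
    fun i => hLmax ▸ Finset.le_sup' (fun i => (L i : ℝ)) (Finset.mem_univ i)
  have hLmax_nonneg : 0 ≤ Lmax := (L 0).2.trans (hL_le 0)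
  have hstep : (1 - σ₂) * quad B d ≤ Lmax * ‖x' - x‖ * ‖d‖ := by
    have hlip := maxD_le_add_of_lipschitzWith f hL hL_le x x' d
    rw [hDd] at hcurv hlip
    linarith
  calc (1 - σ₂) / Lmax * (quad B d / (‖d‖ * ‖mulVecE B d‖)) * ‖dsd‖
      = (1 - σ₂) * quad B d * ‖dsd‖ / (Lmax * ‖d‖ * ‖mulVecE B d‖) := by ring
    -- a zero denominator (`Lmax = 0` or `d = 0`) is harmless: then the quotient is `0`
    _ ≤ ‖x' - x‖ := div_le_of_le_mul₀ (by positivity) (norm_nonneg _) <| calc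
      (1 - σ₂) * quad B d * ‖dsd‖ ≤ Lmax * ‖x' - x‖ * ‖d‖ * ‖dsd‖ := by gcongr
      _ ≤ Lmax * ‖x' - x‖ * ‖d‖ * ‖mulVecE B d‖ := by gcongr
      _ = ‖x' - x‖ * (Lmax * ‖d‖ * ‖mulVecE B d‖) := by ring

/-- lower bound on the step length under the Wolfe curvature condition. -/
theorem stmt19 {n m : ℕ} [NeZero m] (f : Fin m → E n → ℝ)
    (hf : ∀ i, ContDiff ℝ 1 (f i))
    (L : Fin m → NNReal) (hL : ∀ i, LipschitzWith (L i) (fun z => gradient (f i) z))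
    (Lmax : ℝ) (hLmax : Lmax = Finset.univ.sup' Finset.univ_nonempty fun i => (L i : ℝ))
    (B : Matrix (Fin n) (Fin n) ℝ) (hB : B.PosDef)
    (x d dsd : E n) (hd0 : d ≠ 0)
    (hdB : ∀ dd : E n, maxD f x d + quad B d / 2 ≤ maxD f x dd + quad B dd / 2)
    (hdsd : ∀ dd : E n, maxD f x dsd + ‖dsd‖ ^ 2 / 2 ≤ maxD f x dd + ‖dd‖ ^ 2 / 2)
    (σ₂ : ℝ) (hσ₂ : σ₂ ∈ Set.Ioo (0 : ℝ) 1)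
    (α : ℝ) (hα : 0 < α) (x' : E n) (hx' : x' = x + α • d)
    (hcurv : σ₂ * maxD f x d ≤ maxD f x' d) :
    ((1 - σ₂) / Lmax) * (quad B d / (‖d‖ * ‖mulVecE B d‖)) * ‖dsd‖ ≤ ‖x' - x‖ :=
  stmt19_general f L hL Lmax hLmax B hB x d dsd hdB hdsd σ₂ x' hcurv
end
end
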